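/- arXiv:1601.07723 — 3 statements merged into one kernel-verified Lean document; each statement's English description precedes it below -/
import Mathlib

section
/- Let k ≥ 3. Then for all n ≥ 2, r_n^(k) = Σ_{j=1}^{k} r_{n−j}^(k) − Σ_{j=k+1}^{2k−1} r_{n−j}^(k), where by convention r_0^(k) = 1, r_1^(k) = 0 and r_j^(k) = 0 for j < 0. -/
/-!
A nonempty string counted by `r_n` splits uniquely into its first two maximal runs and the
rest, `0^a 1^b t` with `1 ≤ a, b ≤ k - 1` and `t` counted by `r_{n-a-b}`; hence
`r_n = ∑_{a,b} r_{n-a-b}` for `n ≥ 1`. Subtracting this identity at `n - 1` telescopes the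
inner sum over `b`, leaving `r_n - r_{n-1} = ∑_a (r_{n-a-1} - r_{n-a-k})`, which is the
recurrence after reindexing.
-/

/-- A binary string (list of booleans, `false` = 0, `true` = 1) avoids `0^k`
and `1^k`, i.e. it contains neither `k` consecutive 0's nor `k` consecutive 1's. -/
def Avoids (k : ℕ) (s : List Bool) : Prop :=
  ¬ (List.replicate k false <:+: s) ∧ ¬ (List.replicate k true <:+: s)
/-- `rcount k n = r_n^(k)`: the number of binary strings of length `n` starting
with 0, ending with 1 and avoiding `0^k` and `1^k` (the empty string counts,
so `rcount k 0 = 1`). -/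
noncomputable def rcount (k n : ℕ) : ℕ :=
  Set.ncard {s : List Bool | s.length = n ∧ Avoids k s ∧
    s.head? ≠ some true ∧ s.getLast? ≠ some false}
/-- `r_n^(k)` extended to integer indices by the convention `r_j^(k) = 0` for `j < 0`. -/
noncomputable def rZ (k : ℕ) (n : ℤ) : ℤ :=
  if n < 0 then 0 else rcount k n.toNat

namespace List

variable {α : Type*}

theorem exists_eq_replicate_append_head?_ne (c : α) (s : List α) :
    ∃ a t, s = replicate a c ++ t ∧ t.head? ≠ some c := by
  induction s with
  | nil => exact ⟨0, [], rfl, by simp⟩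
  | cons x s ih =>
    by_cases hx : x = c
    · obtain ⟨a, t, rfl, ht⟩ := ih
      exact ⟨a + 1, t, by simp [replicate_succ, hx], ht⟩
    · exact ⟨0, x :: s, rfl, by simpa using hx⟩

theorem replicate_append_inj_of_head?_ne {c : α} {a a' : ℕ} {t t' : List α}
    (ht : t.head? ≠ some c) (ht' : t'.head? ≠ some c)
    (h : replicate a c ++ t = replicate a' c ++ t') : a = a' ∧ t = t' := by
  wlog hle : a ≤ a' generalizing a a' t t'
  · obtain ⟨h₁, h₂⟩ := this ht' ht h.symm (by omega)
    exact ⟨h₁.symm, h₂.symm⟩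
  obtain ⟨d, rfl⟩ := Nat.exists_eq_add_of_le hle
  rw [replicate_add, append_assoc, append_cancel_left_eq] at h
  cases d with
  | zero => simpa using h
  | succ d => simp [h, replicate_succ] at ht

theorem head?_replicate_append {c : α} {a : ℕ} (ha : a ≠ 0) (t : List α) :
    (replicate a c ++ t).head? = some c := by
  simp [head?_append, head?_replicate, ha]

theorem replicate_prefix_replicate_append_iff {c d : α} {k a : ℕ} {t : List α}
    (hk : k ≠ 0) (ha : a ≠ 0) (ht : t.head? ≠ some c) :
    replicate k d <+: replicate a c ++ t ↔ d = c ∧ k ≤ a := by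
  constructor
  · rintro ⟨u, hu⟩
    have hd : d = c := by
      have := congrArg head? hu
      rwa [head?_replicate_append hk, head?_replicate_append ha, Option.some_inj] at this
    subst hd
    refine ⟨rfl, Nat.le_of_not_lt fun hak => ht ?_⟩
    rw [← Nat.add_sub_cancel' hak.le, replicate_add, append_assoc, append_cancel_left_eq] at hu
    rw [← hu, head?_replicate_append (by omega)]
  · rintro ⟨rfl, hka⟩
    exact (prefix_replicate_iff.mpr (by simpa using hka)).trans (prefix_append _ _)

theorem replicate_infix_replicate_append_iff {c d : α} {k a : ℕ} {t : List α}
    (hk : k ≠ 0) (ht : t.head? ≠ some c) :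
    replicate k d <:+: replicate a c ++ t ↔ d = c ∧ k ≤ a ∨ replicate k d <:+: t := by
  induction a with
  | zero => simp [hk]
  | succ a ih =>
    rw [replicate_succ, cons_append, infix_cons_iff, ih, ← cons_append, ← replicate_succ,
      replicate_prefix_replicate_append_iff hk (by omega) ht]
    grind

end List

open List

theorem avoids_replicate_append_iff {c : Bool} {k a : ℕ} {t : List Bool}
    (ht : t.head? ≠ some c) : Avoids k (replicate a c ++ t) ↔ a < k ∧ Avoids k t := by
  rcases Nat.eq_zero_or_pos k with rfl | hk
  · simp [Avoids]
  · unfold Avoids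
    rw [replicate_infix_replicate_append_iff hk.ne' ht,
      replicate_infix_replicate_append_iff hk.ne' ht]
    cases c <;> simp <;> tauto

def rcountSet (k n : ℕ) : Set (List Bool) :=
  {s | s.length = n ∧ Avoids k s ∧ s.head? ≠ some true ∧ s.getLast? ≠ some false}

theorem rcountSet_finite (k n : ℕ) : (rcountSet k n).Finite :=
  (List.finite_length_eq Bool n).subset fun _ hs => hs.1

noncomputable def rcountFinset (k n : ℕ) : Finset (List Bool) :=
  (rcountSet_finite k n).toFinset

theorem rcount_eq_card (k n : ℕ) : rcount k n = (rcountFinset k n).card :=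
  Set.ncard_eq_toFinset_card _ (rcountSet_finite k n)

def prependRuns (a b : ℕ) (t : List Bool) : List Bool :=
  replicate a false ++ (replicate b true ++ t)

theorem prependRuns_injective (a b : ℕ) : Function.Injective (prependRuns a b) := by
  intro t t' h
  simpa [prependRuns] using h

theorem prependRuns_inj {a a' b b' : ℕ} {t t' : List Bool} (hb : b ≠ 0) (hb' : b' ≠ 0)
    (ht : t.head? ≠ some true) (ht' : t'.head? ≠ some true)
    (h : prependRuns a b t = prependRuns a' b' t') : a = a' ∧ b = b' ∧ t = t' := by
  unfold prependRuns at h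
  obtain ⟨rfl, hrest⟩ := replicate_append_inj_of_head?_ne (by simp [head?_replicate_append hb])
    (by simp [head?_replicate_append hb']) h
  exact ⟨rfl, replicate_append_inj_of_head?_ne ht ht' hrest⟩

theorem prependRuns_mem_rcountSet_iff {k n a b : ℕ} {t : List Bool} (ha : a ≠ 0) (hb : b ≠ 0)
    (ht : t.head? ≠ some true) :
    prependRuns a b t ∈ rcountSet k n ↔
      (a < k ∧ b < k ∧ a + b ≤ n) ∧ t ∈ rcountSet k (n - a - b) := by
  have hbt : (replicate b true ++ t).head? ≠ some false := by
    simp [head?_replicate_append hb]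
  have hlast : (prependRuns a b t).getLast? ≠ some false ↔ t.getLast? ≠ some false := by
    cases h : t.getLast? <;> simp [prependRuns, getLast?_append, getLast?_replicate, h, hb]
  simp only [rcountSet, Set.mem_ofPred, hlast]
  rw [prependRuns, avoids_replicate_append_iff hbt, avoids_replicate_append_iff ht,
    head?_replicate_append ha]
  simp only [length_append, length_replicate]
  constructor
  · rintro ⟨hlen, ⟨hak, hbk, hav⟩, -, hl⟩
    exact ⟨⟨hak, hbk, by omega⟩, by omega, hav, ht, hl⟩
  · rintro ⟨⟨hak, hbk, hn⟩, hlen, hav, -, hl⟩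
    exact ⟨by omega, ⟨hak, hbk, hav⟩, by simp, hl⟩

theorem eq_nil_of_head?_ne_of_head?_ne {l : List Bool} (hf : l.head? ≠ some false)
    (ht : l.head? ≠ some true) : l = [] := by
  cases l with
  | nil => rfl
  | cons x _ => cases x <;> simp_all

theorem exists_prependRuns_eq_of_mem_rcountSet {k n : ℕ} {s : List Bool} (hn : n ≠ 0)
    (hs : s ∈ rcountSet k n) :
    ∃ a b t, a ≠ 0 ∧ b ≠ 0 ∧ t.head? ≠ some true ∧ s = prependRuns a b t := by
  obtain ⟨hlen, -, hhead, hlast⟩ := hs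
  obtain ⟨a, u, rfl, hu⟩ := exists_eq_replicate_append_head?_ne false s
  obtain ⟨b, t, rfl, ht⟩ := exists_eq_replicate_append_head?_ne true u
  refine ⟨a, b, t, ?_, ?_, ht, rfl⟩
  · rintro rfl
    have := eq_nil_of_head?_ne_of_head?_ne hu (by simpa using hhead)
    simp_all
  · rintro rfl
    obtain rfl : t = [] := eq_nil_of_head?_ne_of_head?_ne (by simpa using hu) ht
    simp_all [getLast?_replicate]

theorem rcountFinset_eq_biUnion {k n : ℕ} (hn : n ≠ 0) :
    rcountFinset k n =
      ((Finset.Ico 1 k ×ˢ Finset.Ico 1 k).filter fun p => p.1 + p.2 ≤ n).biUnion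
        fun p => (rcountFinset k (n - p.1 - p.2)).image (prependRuns p.1 p.2) := by
  ext s
  simp only [rcountFinset, Finset.mem_biUnion, Finset.mem_filter, Finset.mem_product,
    Finset.mem_Ico, Finset.mem_image, Set.Finite.mem_toFinset]
  constructor
  · intro hs
    obtain ⟨a, b, t, ha, hb, ht, rfl⟩ := exists_prependRuns_eq_of_mem_rcountSet hn hs
    obtain ⟨⟨hak, hbk, hab⟩, htm⟩ := (prependRuns_mem_rcountSet_iff ha hb ht).mp hs
    exact ⟨(a, b), ⟨⟨⟨by omega, hak⟩, by omega, hbk⟩, hab⟩, t, htm, rfl⟩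
  · rintro ⟨⟨a, b⟩, ⟨⟨⟨ha, hak⟩, hb, hbk⟩, hab⟩, t, htm, rfl⟩
    exact (prependRuns_mem_rcountSet_iff (by omega) (by omega) htm.2.2.1).mpr
      ⟨⟨hak, hbk, hab⟩, htm⟩

theorem rcount_eq_sum {k n : ℕ} (hn : n ≠ 0) :
    rcount k n = ∑ a ∈ Finset.Ico 1 k, ∑ b ∈ Finset.Ico 1 k,
      if a + b ≤ n then rcount k (n - a - b) else 0 := by
  rw [← Finset.sum_product' (f := fun a b => if a + b ≤ n then rcount k (n - a - b) else 0),
    ← Finset.sum_filter, rcount_eq_card, rcountFinset_eq_biUnion hn, Finset.card_biUnion]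
  · refine Finset.sum_congr rfl fun p _ => ?_
    rw [Finset.card_image_of_injective _ (prependRuns_injective _ _), rcount_eq_card]
  · rintro ⟨a, b⟩ hp ⟨a', b'⟩ hp' hne
    simp only [Finset.coe_filter, Finset.mem_product, Finset.mem_Ico, Set.mem_ofPred] at hp hp'
    refine Finset.disjoint_left.mpr ?_
    simp only [Finset.mem_image, rcountFinset, Set.Finite.mem_toFinset, not_exists, not_and]
    rintro _ ⟨t, ht, rfl⟩ t' ht' h
    obtain ⟨rfl, rfl, -⟩ := prependRuns_inj (by omega) (by omega) ht'.2.2.1 ht.2.2.1 h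
    exact hne rfl

theorem rZ_natCast (k m : ℕ) : rZ k m = rcount k m := by
  simp [rZ]

theorem rZ_natCast_sub_natCast (k m j : ℕ) :
    rZ k (m - j) = if j ≤ m then (rcount k (m - j) : ℤ) else 0 := by
  split_ifs with h
  · rw [← Nat.cast_sub h, rZ_natCast]
  · exact if_pos (by omega)

theorem rZ_eq_sum (k : ℕ) {n : ℤ} (hn : 1 ≤ n) :
    rZ k n = ∑ a ∈ Finset.Ico 1 k, ∑ b ∈ Finset.Ico 1 k, rZ k (n - a - b) := by
  lift n to ℕ using by omega
  rw [rZ_natCast, rcount_eq_sum (by omega)]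
  push_cast
  refine Finset.sum_congr rfl fun a _ => Finset.sum_congr rfl fun b _ => ?_
  rw [sub_sub, ← Nat.cast_add, rZ_natCast_sub_natCast, Nat.sub_sub]

section Recurrence

variable {G : Type*} [AddCommGroup G]

theorem sum_Ico_one_sub_sub_one (f : ℤ → G) (m : ℤ) {k : ℕ} (hk : 1 ≤ k) :
    ∑ b ∈ Finset.Ico 1 k, (f (m - b) - f (m - 1 - b)) = f (m - 1) - f (m - k) := by
  induction k, hk using Nat.le_induction with
  | base => simp
  | succ k hk ih =>
    rw [Finset.sum_Ico_succ_top hk, ih, show m - 1 - (k : ℤ) = m - ((k + 1 : ℕ) : ℤ) by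
      push_cast; ring]
    abel

theorem sum_Ico_sub_sub_natCast (f : ℤ → G) (n : ℤ) (p q c : ℕ) :
    ∑ a ∈ Finset.Ico p q, f (n - a - c) = ∑ j ∈ Finset.Ico (p + c) (q + c), f (n - j) := by
  rw [← Finset.sum_Ico_add' (fun j : ℕ => f (n - j))]
  simp [sub_sub]

theorem eq_sum_Icc_sub_sum_Icc_of_eq_sum_Ico_sum_Ico {f : ℤ → G} {k : ℕ} (hk : 1 ≤ k)
    (hf : ∀ n, 1 ≤ n → f n = ∑ a ∈ Finset.Ico 1 k, ∑ b ∈ Finset.Ico 1 k, f (n - a - b))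
    {n : ℤ} (hn : 2 ≤ n) :
    f n = ∑ j ∈ Finset.Icc 1 k, f (n - j) - ∑ j ∈ Finset.Icc (k + 1) (2 * k - 1), f (n - j) := by
  have hdiff : f n - f (n - 1) = ∑ a ∈ Finset.Ico 1 k, (f (n - a - 1) - f (n - a - k)) := by
    rw [hf n (by omega), hf (n - 1) (by omega), ← Finset.sum_sub_distrib]
    refine Finset.sum_congr rfl fun a _ => ?_
    rw [← Finset.sum_sub_distrib, ← sum_Ico_one_sub_sub_one _ _ hk, sub_right_comm n 1]
  have hnear :
      ∑ j ∈ Finset.Icc 1 k, f (n - j) = f (n - 1) + ∑ a ∈ Finset.Ico 1 k, f (n - a - 1) := by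
    rw [← Finset.Ico_add_one_right_eq_Icc, Finset.sum_eq_sum_Ico_succ_bot (by omega)]
    simpa using (sum_Ico_sub_sub_natCast f n 1 k 1).symm
  have hfar : ∑ j ∈ Finset.Icc (k + 1) (2 * k - 1), f (n - j) =
      ∑ a ∈ Finset.Ico 1 k, f (n - a - k) := by
    rw [sum_Ico_sub_sub_natCast, Nat.add_comm, ← Finset.Ico_add_one_right_eq_Icc]
    congr 2
    omega
  rw [hnear, hfar, add_sub_assoc, ← Finset.sum_sub_distrib, ← hdiff]
  abel

end Recurrence

/-- The recurrence `r_n^(k) = Σ_{j=1}^{k} r_{n−j}^(k) − Σ_{j=k+1}^{2k−1} r_{n−j}^(k)`. -/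
theorem rcount_recurrence' (k : ℕ) (hk : 3 ≤ k) :
    ∀ n : ℤ, 2 ≤ n →
      rZ k n = ∑ j ∈ Finset.Icc 1 k, rZ k (n - j)
             - ∑ j ∈ Finset.Icc (k + 1) (2*k - 1), rZ k (n - j) := fun _ hn =>
  eq_sum_Icc_sub_sum_Icc_of_eq_sum_Ico_sum_Ico (by omega) (fun _ => rZ_eq_sum k) hn
end

section
/- Let m ≥ 2, n ≥ 2k and 3 ≤ k ≤ ⌊n/2⌋. If n = 2k, then |S^(k)_{m×n}| = (f_{2k−1}^(k−1))^{m−2}. If n > 2k, then |S^(k)_{m×n}| = f_{n−2k−1}^(k−1) · (f_{n−2k+1}^(k−1) + d_{n−2k+2}^(k)) · (f_{n−1}^(k−1))^{m−2}. -/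
/-- The `i`-th row (0-indexed) of an `m × n` binary matrix, read as a binary string. -/
def row {m n : ℕ} (A : Fin m → Fin n → Bool) (i : ℕ) : List Bool :=
  List.ofFn (fun j : Fin n => if h : i < m then A ⟨i, h⟩ j else false)
/-- The set `S^(k)_{m×n}`: binary `m × n` matrices whose first row is
`1^{k−1} 0 w 1 0^{k−1}` (with `0w1` of length `n−2k+2` avoiding `0^k` and `1^k`),
whose middle rows end with `0` and avoid `0^k` and `1^k`, and whose last row is
`1^k v 0^k` (with `v` of length `n−2k` avoiding `0^k` and `1^k`). -/
def SkSet (m n k : ℕ) : Set (Fin m → Fin n → Bool) :=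
  {A |
    (∃ v : List Bool, v.length = n - 2*k + 2 ∧ Avoids k v ∧
        v.head? = some false ∧ v.getLast? = some true ∧
        row A 0 = List.replicate (k-1) true ++ v ++ List.replicate (k-1) false) ∧
    (∀ i : ℕ, 1 ≤ i → i ≤ m - 2 → Avoids k (row A i) ∧ (row A i).getLast? = some false) ∧
    (∃ v : List Bool, v.length = n - 2*k ∧ Avoids k v ∧
        row A (m-1) = List.replicate k true ++ v ++ List.replicate k false)}
/-- The `k`-generalized Fibonacci numbers: `f_n^(k) = 2^n` for `0 ≤ n ≤ k−1`
and `f_n^(k) = f_{n−1}^(k) + … + f_{n−k}^(k)` for `n ≥ k`. -/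
def genFib (k : ℕ) (n : ℕ) : ℕ :=
  if n < k then 2 ^ n
  else ∑ j ∈ (Finset.Icc 1 k).attach, genFib k (n - j.1)
termination_by n
decreasing_by
  have hj := j.2
  simp only [Finset.mem_Icc] at hj
  omega
/-- The sequence `d_n^(k)`: `1` if `n ≡ 0 (mod k)`, `−1` if `n ≡ 1 (mod k)`,
and `0` otherwise. -/
def dseq (k n : ℕ) : ℤ :=
  if n % k = 0 then 1 else if n % k = 1 then -1 else 0


/-!
Reading a row from the right, a string that avoids `0^k` and `1^k` and ends in `b` is a shorter
such string ending in `!b` followed by a run `b^j` with `1 ≤ j ≤ k - 1`, and this decomposition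
is unique. Hence `f^(k-1)_(n-1)` strings of length `n` end in a given letter, which counts the
middle rows, and `2 f^(k-1)_(L-1)` strings of length `L ≥ 1` avoid both words, which counts the
free part of the last row. For the free part of the first row let `B_t` (resp. `N_t`) count
the strings of length `t` that start with `0` and end with `1` (resp. `0`). Stripping the last
run gives `B_t = ∑_{j=1}^{k-1} N_(t-j)`, and complementing every letter gives
`N_t + B_t = f^(k-1)_(t-1)`; since the window sums `∑_{j<k} d_(t-j)` vanish,
`2 B_t = f^(k-1)_(t-1) + d_t` follows by induction. The rows of a matrix in `S` are constrained
independently, so `|S|` is the product of the row counts.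
-/

open List

section Runs

variable {α : Type*}

theorem exists_eq_append_replicate_getLast?_ne (s : List α) (b : α) :
    ∃ s' j, s = s' ++ replicate j b ∧ s'.getLast? ≠ some b := by
  induction s using List.reverseRecOn with
  | nil => exact ⟨[], 0, rfl, by simp⟩
  | append_singleton t c ih =>
    by_cases hc : c = b
    · obtain ⟨s', j, rfl, hs'⟩ := ih
      exact ⟨s', j + 1, by simp [hc, replicate_succ'], hs'⟩
    · exact ⟨t ++ [c], 0, by simp, by simpa using hc⟩

theorem append_replicate_inj {s t : List α} {b : α} {i j : ℕ} (hs : s.getLast? ≠ some b)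
    (ht : t.getLast? ≠ some b) (h : s ++ replicate i b = t ++ replicate j b) :
    s = t ∧ i = j := by
  wlog hij : i ≤ j generalizing s t i j
  · exact (this ht hs h.symm (by omega)).imp Eq.symm Eq.symm
  obtain ⟨d, rfl⟩ := Nat.exists_eq_add_of_le hij
  rw [add_comm, replicate_add, ← append_assoc] at h
  obtain rfl := append_cancel_right h
  rcases d with _ | d
  · simp
  · simp [getLast?_append, getLast?_replicate] at hs

theorem ncard_biUnion_image_append_replicate {S : ℕ → Set (List α)} {b : α} (I : Finset ℕ)
    (hfin : ∀ j, (S j).Finite) (hlast : ∀ j, ∀ s ∈ S j, s.getLast? ≠ some b) :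
    (⋃ j ∈ I, (· ++ replicate j b) '' S j).ncard = ∑ j ∈ I, (S j).ncard := by
  have hdisj : (I : Set ℕ).PairwiseDisjoint fun j => (· ++ replicate j b) '' S j := by
    rintro i - j - hij
    refine Set.disjoint_left.2 ?_
    rintro _ ⟨s, hs, rfl⟩ ⟨t, ht, heq⟩
    exact hij (append_replicate_inj (hlast j t ht) (hlast i s hs) heq).2.symm
  have := I.finite_toSet.ncard_biUnion (fun j _ => (hfin j).image _) hdisj
  rw [finsum_mem_coe_finset, Finset.set_biUnion_coe] at this
  rw [this]
  exact Finset.sum_congr rfl fun j _ =>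
    Set.ncard_image_of_injective _ (append_left_injective _)

end Runs

section Avoids

variable {k j : ℕ} {s t : List Bool} {b : Bool}

theorem avoids_iff_forall : Avoids k s ↔ ∀ c, ¬ replicate k c <:+: s := by
  simp [Avoids, Bool.forall_bool]

theorem avoids_of_length_lt (h : s.length < k) : Avoids k s :=
  avoids_iff_forall.2 fun _ hc => by simpa using (hc.length_le.trans_lt h).ne

theorem Avoids.mono (hs : Avoids k s) (hts : t <:+: s) : Avoids k t :=
  avoids_iff_forall.2 fun c hc => avoids_iff_forall.1 hs c (hc.trans hts)

theorem replicate_infix_map_not {c : Bool} :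
    replicate k c <:+: s.map not ↔ replicate k (!c) <:+: s := by
  constructor <;> intro h <;> simpa [map_replicate, Function.comp_def] using h.map not

theorem avoids_map_not : Avoids k (s.map not) ↔ Avoids k s := by
  simp [avoids_iff_forall, replicate_infix_map_not, Bool.forall_bool, and_comm]

theorem Avoids.append_replicate (hs : Avoids k s) (hlast : s.getLast? ≠ some b) (hj : j < k) :
    Avoids k (s ++ replicate j b) := by
  refine avoids_iff_forall.2 fun c hc => ?_
  rcases infix_append_iff_ne_nil.1 hc with h | h | ⟨l₁, l₂, h₁, h₂, hl, hs₁, hp₂⟩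
  · exact avoids_iff_forall.1 hs c h
  · have := h.length_le
    simp only [length_replicate] at this
    omega
  · rw [eq_comm, append_eq_replicate_iff] at hl
    obtain ⟨x, hx⟩ := exists_mem_of_ne_nil l₂ h₂
    have hcb : c = b := by
      have hxc := hx
      rw [hl.2.2] at hxc
      exact (eq_of_mem_replicate hxc).symm.trans (eq_of_mem_replicate (hp₂.subset hx))
    obtain ⟨u, rfl⟩ := hs₁
    rw [getLast?_append_of_ne_nil _ h₁, hl.2.1, getLast?_replicate,
      if_neg (by simpa using h₁), hcb] at hlast
    exact hlast rfl

theorem Avoids.exists_eq_append_replicate (hs : Avoids k s) (hlast : s.getLast? = some b) :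
    ∃ s' j, 0 < j ∧ j < k ∧ s'.getLast? ≠ some b ∧ s = s' ++ replicate j b := by
  obtain ⟨s', j, rfl, hs'⟩ := exists_eq_append_replicate_getLast?_ne s b
  refine ⟨s', j, Nat.pos_of_ne_zero ?_, ?_, hs', rfl⟩
  · rintro rfl
    simp_all
  · by_contra! hkj
    exact avoids_iff_forall.1 hs b
      ((infix_replicate_iff.2 ⟨by simpa using hkj, by simp⟩).trans (suffix_append _ _).isInfix)

theorem setOf_length_eq_zero_avoids (hk : 0 < k) :
    {s : List Bool | s.length = 0 ∧ Avoids k s} = {[]} := by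
  ext s
  simp only [length_eq_zero_iff, Set.mem_ofPred_eq, Set.mem_singleton_iff, and_iff_left_iff_imp]
  rintro rfl
  exact avoids_of_length_lt hk

end Avoids

section ListCount

variable {α : Type*} [Fintype α]

theorem ncard_setOf_length_eq (n : ℕ) :
    {s : List α | s.length = n}.ncard = Fintype.card α ^ n := by
  rw [← Nat.card_coe_set_eq, ← card_vector n, ← Nat.card_eq_fintype_card]
  rfl

theorem ncard_setOf_length_getLast? (n : ℕ) (b : α) :
    {s : List α | s.length = n + 1 ∧ s.getLast? = some b}.ncard = Fintype.card α ^ n := by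
  have : {s : List α | s.length = n + 1 ∧ s.getLast? = some b} =
      (· ++ [b]) '' {s | s.length = n} := by
    ext s
    constructor
    · rintro ⟨hs, hb⟩
      obtain ⟨t, rfl⟩ := List.getLast?_eq_some_iff.1 hb
      exact ⟨t, by simpa using hs, rfl⟩
    · rintro ⟨t, rfl, rfl⟩
      simp
  rw [this, Set.ncard_image_of_injective _ (List.append_left_injective [b]), ncard_setOf_length_eq]

theorem ncard_setOf_length_head?_getLast? (n : ℕ) (a b : α) :
    {s : List α | s.length = n + 2 ∧ s.head? = some a ∧ s.getLast? = some b}.ncard =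
      Fintype.card α ^ n := by
  have : {s : List α | s.length = n + 2 ∧ s.head? = some a ∧ s.getLast? = some b} =
      (a :: ·) '' {s | s.length = n + 1 ∧ s.getLast? = some b} := by
    ext s
    constructor
    · rintro ⟨hs, ha, hb⟩
      obtain ⟨t, rfl⟩ := List.head?_eq_some_iff.1 ha
      have ht : t ≠ [] := by rintro rfl; simp at hs
      exact ⟨t, ⟨by simpa using hs, by rwa [List.getLast?_cons_of_ne_nil ht] at hb⟩, rfl⟩
    · rintro ⟨t, ⟨ht, hb⟩, rfl⟩
      have ht' : t ≠ [] := by rintro rfl; simp at ht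
      simp [ht, List.getLast?_cons_of_ne_nil ht', hb]
  rw [this, Set.ncard_image_of_injective _ List.cons_injective, ncard_setOf_length_getLast?]

end ListCount

theorem genFib_of_lt {K n : ℕ} (h : n < K) : genFib K n = 2 ^ n := by
  rw [genFib, if_pos h]

theorem genFib_of_le {K n : ℕ} (h : K ≤ n) :
    genFib K n = ∑ j ∈ Finset.Icc 1 K, genFib K (n - j) := by
  rw [genFib, if_neg (by omega)]
  exact Finset.sum_attach (Finset.Icc 1 K) fun j => genFib K (n - j)

section Dseq

variable {k : ℕ}

theorem dseq_add_self (n : ℕ) : dseq k (n + k) = dseq k n := by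
  simp [dseq]

theorem dseq_one (hk : 2 ≤ k) : dseq k 1 = -1 := by
  simp [dseq, Nat.mod_eq_of_lt (show 1 < k by omega)]

theorem dseq_of_lt {n : ℕ} (h2 : 2 ≤ n) (hn : n < k) : dseq k n = 0 := by
  simp [dseq, Nat.mod_eq_of_lt hn]
  omega

theorem sum_range_dseq_add (hk : 2 ≤ k) (a : ℕ) :
    ∑ i ∈ Finset.range k, dseq k (a + i) = 0 := by
  induction a with
  | zero =>
    obtain ⟨k, rfl⟩ := Nat.exists_eq_add_of_le' hk
    rw [Finset.sum_range_succ', Finset.sum_range_succ']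
    have hzero : ∀ i ∈ Finset.range k, dseq (k + 2) (0 + (i + 1 + 1)) = 0 := fun i hi => by
      have := Finset.mem_range.1 hi
      simp [dseq, Nat.mod_eq_of_lt (show i + 2 < k + 2 by omega)]
    rw [Finset.sum_eq_zero hzero]
    simp [dseq, Nat.mod_eq_of_lt (show 1 < k + 2 by omega)]
  | succ a ih =>
    have hshift := Finset.sum_range_succ' (fun i => dseq k (a + i)) k
    rw [Finset.sum_range_succ, ih, dseq_add_self] at hshift
    simpa [add_assoc, add_comm 1] using hshift

theorem sum_Icc_dseq_sub (hk : 2 ≤ k) {n : ℕ} (hn : k ≤ n) :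
    ∑ j ∈ Finset.Icc 1 (k - 1), dseq k (n - j) = -dseq k n := by
  have hwindow : ∑ j ∈ Finset.range k, dseq k (n - j) = 0 := by
    rw [← sum_range_dseq_add hk (n + 1 - k), ← Finset.sum_range_reflect]
    refine Finset.sum_congr rfl fun j hj => ?_
    rw [Finset.mem_range] at hj
    congr 1
    omega
  have hrange : Finset.range k = insert 0 (Finset.Icc 1 (k - 1)) := by
    ext j
    simp only [Finset.mem_range, Finset.mem_insert, Finset.mem_Icc]
    omega
  rw [hrange, Finset.sum_insert (by simp)] at hwindow
  simpa [eq_neg_iff_add_eq_zero, add_comm] using hwindow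

end Dseq

section EndingIn

variable {k n : ℕ} {s : List Bool} {b : Bool}

def endingIn (k n : ℕ) (b : Bool) : Set (List Bool) :=
  {s | s.length = n ∧ Avoids k s ∧ s.getLast? = some b}

theorem endingIn_finite (k n : ℕ) (b : Bool) : (endingIn k n b).Finite :=
  (List.finite_length_eq Bool n).subset fun _ hs => hs.1

theorem getLast?_eq_some_not (hs : s ≠ []) (hb : s.getLast? ≠ some b) :
    s.getLast? = some (!b) := by
  rw [List.getLast?_eq_some_getLast hs] at hb ⊢
  cases b <;> simp_all

theorem sep_endingIn_eq_biUnion (p : Option Bool → Prop) (hkn : k ≤ n) :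
    {s ∈ endingIn k n b | p s.head?} =
      ⋃ j ∈ Finset.Icc 1 (k - 1),
        (· ++ replicate j b) '' {s ∈ endingIn k (n - j) (!b) | p s.head?} := by
  ext s
  simp only [endingIn, Set.mem_ofPred_eq, Set.mem_iUnion, Set.mem_image, Finset.mem_Icc,
    exists_prop]
  constructor
  · rintro ⟨⟨hlen, hav, hlast⟩, hp⟩
    obtain ⟨s', j, hj, hjk, hs', rfl⟩ := hav.exists_eq_append_replicate hlast
    simp only [length_append, length_replicate] at hlen
    have hne : s' ≠ [] := by rintro rfl; simp at hlen; omega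
    rw [head?_append_of_ne_nil _ hne] at hp
    exact ⟨j, ⟨hj, by omega⟩, s', ⟨⟨by omega, hav.mono infix_append_left,
      getLast?_eq_some_not hne hs'⟩, hp⟩, rfl⟩
  · rintro ⟨j, ⟨hj, hjk⟩, s', ⟨⟨hlen, hav, hlast⟩, hp⟩, rfl⟩
    have hne : s' ≠ [] := by rintro rfl; simp at hlast
    refine ⟨⟨by simp; omega, hav.append_replicate (by simp [hlast]) (by omega), ?_⟩, ?_⟩
    · simp [getLast?_append, getLast?_replicate, show j ≠ 0 by omega]
    · rwa [head?_append_of_ne_nil _ hne]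

theorem endingIn_eq_biUnion (hkn : k ≤ n) :
    endingIn k n b =
      ⋃ j ∈ Finset.Icc 1 (k - 1), (· ++ replicate j b) '' endingIn k (n - j) (!b) := by
  simpa using sep_endingIn_eq_biUnion (b := b) (fun _ => True) hkn

end EndingIn

section Counts

variable {k n : ℕ}

theorem ncard_endingIn (hk : 2 ≤ k) (hn : 0 < n) (b : Bool) :
    (endingIn k n b).ncard = genFib (k - 1) (n - 1) := by
  induction n using Nat.strong_induction_on generalizing b with
  | _ n ih =>
  rcases lt_or_ge n k with hnk | hkn
  · have hsmall : endingIn k n b = {s | s.length = n - 1 + 1 ∧ s.getLast? = some b} := by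
      ext s
      simp only [endingIn, Set.mem_ofPred_eq, Nat.sub_add_cancel hn]
      exact ⟨fun h => ⟨h.1, h.2.2⟩, fun h => ⟨h.1, avoids_of_length_lt (by omega), h.2⟩⟩
    rw [hsmall, ncard_setOf_length_getLast?, genFib_of_lt (by omega), Fintype.card_bool]
  · rw [endingIn_eq_biUnion hkn,
      ncard_biUnion_image_append_replicate _ (fun _ => endingIn_finite ..)
        (fun _ s hs => by simp [hs.2.2]),
      genFib_of_le (by omega)]
    refine Finset.sum_congr rfl fun j hj => ?_
    rw [Finset.mem_Icc] at hj
    rw [ih (n - j) (by omega) (by omega), Nat.sub_right_comm]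

theorem ncard_setOf_length_avoids (hk : 2 ≤ k) (hn : 0 < n) :
    {s | s.length = n ∧ Avoids k s}.ncard = 2 * genFib (k - 1) (n - 1) := by
  have hsplit : {s | s.length = n ∧ Avoids k s} = endingIn k n false ∪ endingIn k n true := by
    ext s
    simp only [endingIn, Set.mem_union, Set.mem_ofPred_eq]
    constructor
    · rintro ⟨hlen, hav⟩
      have hne : s ≠ [] := by rintro rfl; simp at hlen; omega
      have hlast := getLast?_eq_some_getLast hne
      cases h : s.getLast hne <;> rw [h] at hlast
      · exact Or.inl ⟨hlen, hav, hlast⟩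
      · exact Or.inr ⟨hlen, hav, hlast⟩
    · rintro (⟨hlen, hav, -⟩ | ⟨hlen, hav, -⟩) <;> exact ⟨hlen, hav⟩
  rw [hsplit, Set.ncard_union_eq ?_ (endingIn_finite ..) (endingIn_finite ..),
    ncard_endingIn hk hn, ncard_endingIn hk hn, two_mul]
  exact Set.disjoint_left.2 fun s hf ht => by simpa [hf.2.2] using ht.2.2

end Counts

section HeadLast

variable {k n : ℕ}

def headLastIn (k n : ℕ) (a b : Bool) : Set (List Bool) :=
  {s ∈ endingIn k n b | s.head? = some a}

theorem headLastIn_finite (k n : ℕ) (a b : Bool) : (headLastIn k n a b).Finite :=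
  (endingIn_finite k n b).sep _

theorem headLastIn_eq_biUnion (a b : Bool) (hkn : k ≤ n) :
    headLastIn k n a b =
      ⋃ j ∈ Finset.Icc 1 (k - 1), (· ++ replicate j b) '' headLastIn k (n - j) a (!b) :=
  sep_endingIn_eq_biUnion (· = some a) hkn

theorem headLastIn_of_lt (a b : Bool) (hn : n + 2 < k) :
    headLastIn k (n + 2) a b =
      {s | s.length = n + 2 ∧ s.head? = some a ∧ s.getLast? = some b} := by
  ext s
  simp only [headLastIn, endingIn, Set.mem_ofPred_eq]
  exact ⟨fun h => ⟨h.1.1, h.2, h.1.2.2⟩,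
    fun h => ⟨⟨h.1, avoids_of_length_lt (by omega), h.2.2⟩, h.2.1⟩⟩

theorem headLastIn_one_false_true : headLastIn k 1 false true = ∅ := by
  refine Set.eq_empty_iff_forall_notMem.2 ?_
  rintro s ⟨⟨hlen, -, hlast⟩, hhead⟩
  obtain ⟨c, rfl⟩ := List.length_eq_one_iff.1 hlen
  simp_all

theorem ncard_headLastIn_false_add_true (b : Bool) :
    (headLastIn k n false b).ncard + (headLastIn k n true b).ncard = (endingIn k n b).ncard := by
  rw [← Set.ncard_union_eq _ (headLastIn_finite ..) (headLastIn_finite ..)]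
  · congr 1
    ext s
    simp only [headLastIn, Set.mem_union, Set.mem_sep_iff, ← and_or_left, and_iff_left_iff_imp]
    rintro ⟨-, -, hlast⟩
    cases s with
    | nil => simp at hlast
    | cons c _ => cases c <;> simp
  · exact Set.disjoint_left.2 fun s hf ht => by simpa [hf.2] using ht.2

theorem ncard_headLastIn_not (a b : Bool) :
    (headLastIn k n (!a) (!b)).ncard = (headLastIn k n a b).ncard := by
  have hpre : headLastIn k n a b = List.map not ⁻¹' headLastIn k n (!a) (!b) := by
    ext s
    simp [headLastIn, endingIn, avoids_map_not, List.head?_map, List.getLast?_map]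
  rw [hpre, Set.ncard_preimage_of_injective_subset_range]
  · exact List.map_injective_iff.2 Bool.not_injective
  · exact fun s _ => ⟨s.map not, by simp [Function.comp_def]⟩

theorem ncard_headLastIn_false_false_add_false_true (hk : 2 ≤ k) (hn : 0 < n) :
    (headLastIn k n false false).ncard + (headLastIn k n false true).ncard =
      genFib (k - 1) (n - 1) := by
  rw [← ncard_endingIn hk hn false, ← ncard_headLastIn_false_add_true false,
    ← ncard_headLastIn_not false true, Bool.not_false, Bool.not_true]

theorem two_mul_ncard_headLastIn_false_true (hk : 2 ≤ k) (hn : 0 < n) :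
    2 * ((headLastIn k n false true).ncard : ℤ) = genFib (k - 1) (n - 1) + dseq k n := by
  induction n using Nat.strong_induction_on with
  | _ n ih =>
  rcases lt_or_ge n k with hnk | hkn
  · obtain rfl | ⟨n, rfl⟩ : n = 1 ∨ ∃ n', n = n' + 2 :=
      (by omega : n = 1 ∨ 2 ≤ n).imp_right Nat.exists_eq_add_of_le'
    · simp [headLastIn_one_false_true, genFib_of_lt (show 0 < k - 1 by omega), dseq_one hk]
    · rw [headLastIn_of_lt _ _ hnk, ncard_setOf_length_head?_getLast?, Fintype.card_bool,
        dseq_of_lt (by omega) hnk, genFib_of_lt (by omega), show n + 2 - 1 = n + 1 by omega]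
      push_cast
      ring
  · have hfalse : ∀ j ∈ Finset.Icc 1 (k - 1),
        2 * ((headLastIn k (n - j) false false).ncard : ℤ) =
          genFib (k - 1) (n - 1 - j) - dseq k (n - j) := by
      intro j hj
      rw [Finset.mem_Icc] at hj
      have hsum := ncard_headLastIn_false_false_add_false_true (n := n - j) hk (by omega)
      have := ih (n - j) (by omega) (by omega)
      rw [Nat.sub_right_comm] at hsum this
      omega
    rw [headLastIn_eq_biUnion _ _ hkn, ncard_biUnion_image_append_replicate _
      (fun _ => headLastIn_finite ..) (fun _ s hs => by simp [hs.1.2.2]), Bool.not_true,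
      genFib_of_le (show k - 1 ≤ n - 1 by omega)]
    push_cast
    rw [Finset.mul_sum, Finset.sum_congr rfl hfalse, Finset.sum_sub_distrib,
      sum_Icc_dseq_sub hk hkn, sub_neg_eq_add]

end HeadLast

theorem Fin.prod_eq_first_mul_pow_mul_last {M : Type*} [CommMonoid M] {m : ℕ} (hm : 2 ≤ m)
    {f : Fin m → M} {a b c : M} (hfirst : ∀ i : Fin m, (i : ℕ) = 0 → f i = a)
    (hmid : ∀ i : Fin m, (i : ℕ) ≠ 0 → (i : ℕ) ≠ m - 1 → f i = b)
    (hlast : ∀ i : Fin m, (i : ℕ) = m - 1 → f i = c) :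
    ∏ i, f i = a * b ^ (m - 2) * c := by
  obtain ⟨m, rfl⟩ := Nat.exists_eq_add_of_le' hm
  rw [Fin.prod_univ_succ, Fin.prod_univ_castSucc, hfirst 0 rfl, hlast _ (by simp),
    Finset.prod_congr rfl fun i _ => hmid _ (by simp) (by simp; omega)]
  simp [mul_assoc]

theorem ncard_preimage_ofFn {α : Type*} {n : ℕ} {S : Set (List α)}
    (hS : ∀ s ∈ S, s.length = n) : (List.ofFn ⁻¹' S : Set (Fin n → α)).ncard = S.ncard :=
  Set.ncard_preimage_of_injective_subset_range List.ofFn_injective fun s hs => by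
    obtain rfl := hS s hs
    exact ⟨s.get, List.ofFn_get s⟩

theorem Set.ncard_univ_pi {ι β : Type*} [Fintype ι] (C : ι → Set β) :
    (Set.univ.pi C).ncard = ∏ i, (C i).ncard := by
  rw [← Nat.card_coe_set_eq, Nat.card_congr (Equiv.Set.univPi C), Nat.card_pi]
  simp only [Nat.card_coe_set_eq]

theorem append_append_injective {α : Type*} (p q : List α) :
    Function.Injective fun v : List α => p ++ v ++ q :=
  (append_left_injective q).comp (append_right_injective p)

section Matrix

variable {m n k : ℕ}

theorem row_eq_ofFn (A : Fin m → Fin n → Bool) {i : ℕ} (hi : i < m) :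
    row A i = List.ofFn (A ⟨i, hi⟩) := by
  simp [row, hi]

def firstRows (k n : ℕ) : Set (List Bool) :=
  (fun v => replicate (k - 1) true ++ v ++ replicate (k - 1) false) ''
    headLastIn k (n - 2 * k + 2) false true

def lastRows (k n : ℕ) : Set (List Bool) :=
  (fun v => replicate k true ++ v ++ replicate k false) '' {v | v.length = n - 2 * k ∧ Avoids k v}

theorem SkSet_eq_pi (hm : 2 ≤ m) :
    SkSet m n k = Set.univ.pi fun i : Fin m => List.ofFn ⁻¹'
      if (i : ℕ) = 0 then firstRows k n else if (i : ℕ) = m - 1 then lastRows k n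
      else endingIn k n false := by
  ext A
  simp only [SkSet, Set.mem_ofPred_eq, Set.mem_univ_pi, Set.mem_preimage]
  constructor
  · rintro ⟨⟨v, hlen, hav, hhead, hlast, hrow⟩, hmid, ⟨w, hwlen, hwav, hwrow⟩⟩ i
    rw [← row_eq_ofFn A i.2]
    split_ifs with h0 hm1
    · rw [h0, hrow]
      exact ⟨v, ⟨⟨hlen, hav, hlast⟩, hhead⟩, rfl⟩
    · rw [hm1, hwrow]
      exact ⟨w, ⟨hwlen, hwav⟩, rfl⟩
    · exact ⟨by simp [row], hmid i (by omega) (by omega)⟩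
  · intro h
    refine ⟨?_, fun i hi1 hi2 => ?_, ?_⟩
    · have h0 := h ⟨0, by omega⟩
      rw [if_pos rfl, ← row_eq_ofFn] at h0
      obtain ⟨v, ⟨⟨hlen, hav, hlast⟩, hhead⟩, hrow⟩ := h0
      exact ⟨v, hlen, hav, hhead, hlast, hrow.symm⟩
    · have hi := h ⟨i, by omega⟩
      rw [if_neg (by simp; omega), if_neg (by simp; omega), ← row_eq_ofFn] at hi
      exact hi.2
    · have hm1 := h ⟨m - 1, by omega⟩
      rw [if_neg (by simp; omega), if_pos rfl, ← row_eq_ofFn] at hm1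
      obtain ⟨w, ⟨hwlen, hwav⟩, hwrow⟩ := hm1
      exact ⟨w, hwlen, hwav, hwrow.symm⟩

theorem ncard_SkSet (hm : 2 ≤ m) (hk : 1 ≤ k) (hn : 2 * k ≤ n) :
    (SkSet m n k).ncard = (headLastIn k (n - 2 * k + 2) false true).ncard *
      (endingIn k n false).ncard ^ (m - 2) * {v | v.length = n - 2 * k ∧ Avoids k v}.ncard := by
  rw [SkSet_eq_pi hm, Set.ncard_univ_pi]
  refine Fin.prod_eq_first_mul_pow_mul_last hm (fun i hi => ?_) (fun i h0 hl => ?_)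
    (fun i hi => ?_)
  · rw [if_pos hi, ncard_preimage_ofFn, firstRows,
      Set.ncard_image_of_injective _ (append_append_injective _ _)]
    rintro _ ⟨v, ⟨⟨hv, -⟩, -⟩, rfl⟩
    simp only [length_append, length_replicate, hv]
    omega
  · rw [if_neg h0, if_neg hl, ncard_preimage_ofFn fun s hs => hs.1]
  · rw [if_neg (by omega), if_pos hi, ncard_preimage_ofFn, lastRows,
      Set.ncard_image_of_injective _ (append_append_injective _ _)]
    rintro _ ⟨v, ⟨hv, -⟩, rfl⟩
    simp only [length_append, length_replicate, hv]
    omega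

end Matrix

theorem SkSet_ncard_genFib_general (m n k : ℕ) (hm : 2 ≤ m) (hk : 3 ≤ k)
    (hn : 2 * k ≤ n) :
    (n = 2 * k → ((SkSet m n k).ncard : ℤ) = (genFib (k - 1) (2*k - 1) : ℤ) ^ (m - 2)) ∧
    (2 * k < n → ((SkSet m n k).ncard : ℤ) =
      (genFib (k - 1) (n - 2*k - 1) : ℤ) *
        ((genFib (k - 1) (n - 2*k + 1) : ℤ) + dseq k (n - 2*k + 2)) *
        (genFib (k - 1) (n - 1) : ℤ) ^ (m - 2)) := by
  have hcard := ncard_SkSet hm (by omega) hn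
  rw [ncard_endingIn (by omega) (by omega)] at hcard
  have hfirst := two_mul_ncard_headLastIn_false_true (k := k) (n := n - 2 * k + 2)
    (by omega) (by omega)
  rw [show n - 2 * k + 2 - 1 = n - 2 * k + 1 by omega] at hfirst
  refine ⟨fun h2k => ?_, fun h2k => ?_⟩
  · subst h2k
    simp only [Nat.sub_self, zero_add, genFib_of_lt (show 1 < k - 1 by omega),
      dseq_of_lt le_rfl (show 2 < k by omega)] at hcard hfirst
    have hβ : (headLastIn k 2 false true).ncard = 1 := by
      rw [pow_one, add_zero] at hfirst
      omega
    rw [hcard, hβ, setOf_length_eq_zero_avoids (by omega), Set.ncard_singleton]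
    push_cast
    ring
  · rw [hcard, ncard_setOf_length_avoids (by omega) (by omega)]
    push_cast
    linear_combination ((genFib (k - 1) (n - 2 * k - 1) : ℤ) *
      (genFib (k - 1) (n - 1) : ℤ) ^ (m - 2)) * hfirst

/-- The cardinality of `S^(k)_{m×n}` in terms of `(k−1)`-generalized Fibonacci
numbers and the sequence `d^(k)`. -/
theorem SkSet_ncard_genFib (m n k : ℕ) (hm : 2 ≤ m) (hk : 3 ≤ k)
    (hkn : k ≤ n / 2) (hn : 2 * k ≤ n) :
    (n = 2 * k → ((SkSet m n k).ncard : ℤ) = (genFib (k - 1) (2*k - 1) : ℤ) ^ (m - 2)) ∧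
    (2 * k < n → ((SkSet m n k).ncard : ℤ) =
      (genFib (k - 1) (n - 2*k - 1) : ℤ) *
        ((genFib (k - 1) (n - 2*k + 1) : ℤ) + dseq k (n - 2*k + 2)) *
        (genFib (k - 1) (n - 1) : ℤ) ^ (m - 2)) :=
  SkSet_ncard_genFib_general m n k hm hk hn
end

section
/- Let m ≥ 2, n ≥ 2k, 3 ≤ k ≤ ⌊n/2⌋ and 0 ≤ h < n−2k. Then the set S^(k,h)_{m×n} ∪ S^(k,h+1)_{m×n} is non-overlapping: every matrix in the union is self non-overlapping, and any two distinct matrices in the union are non-overlapping. -/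
/-- `(p, q)` is an overlap of `B` on `A`: a nonzero integer shift with
`|p| ≤ m−1`, `|q| ≤ n−1` such that `A (i,j) = B (i+p, j+q)` whenever both
`(i,j)` and `(i+p, j+q)` are valid positions. -/
def IsOverlap {m n : ℕ} (A B : Fin m → Fin n → Bool) (p q : ℤ) : Prop :=
  ¬ (p = 0 ∧ q = 0) ∧ p.natAbs ≤ m - 1 ∧ q.natAbs ≤ n - 1 ∧
    ∀ (i : Fin m) (j : Fin n) (i' : Fin m) (j' : Fin n),
      (i' : ℤ) = (i : ℤ) + p → (j' : ℤ) = (j : ℤ) + q → A i j = B i' j'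
/-- The set `S^(k,h)_{m×n}`: binary `m × n` matrices whose first row is
`1^h 1^{k−1} 0 w 1 0^{k−1}` (with `0w1` of length `n−2k+2−h` avoiding `0^k` and
`1^k`), whose middle rows end with `0` and avoid `0^k` and `1^k`, and whose last
row is `1^h 1^k v 0^k` (with `v` of length `n−2k−h` avoiding `0^k` and `1^k`). -/
def SkhSet (m n k h : ℕ) : Set (Fin m → Fin n → Bool) :=
  {A |
    (∃ v : List Bool, v.length = n - 2*k + 2 - h ∧ Avoids k v ∧
        v.head? = some false ∧ v.getLast? = some true ∧
        row A 0 = List.replicate (h + (k-1)) true ++ v ++ List.replicate (k-1) false) ∧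
    (∀ i : ℕ, 1 ≤ i → i ≤ m - 2 → Avoids k (row A i) ∧ (row A i).getLast? = some false) ∧
    (∃ v : List Bool, v.length = n - 2*k - h ∧ Avoids k v ∧
        row A (m-1) = List.replicate (h + k) true ++ v ++ List.replicate k false)}

/-!
Every row of a matrix of `S^(k,g)` ends in `0`, its last row is `1^(g+k) v 0^k`, its middle rows
contain neither `0^k` nor `1^k`, and its first row `1^(g+k-1) 0 w 1 0^(k-1)` contains no `0^k`,
and no `1^k` inside `0w1`. Swapping `A` and `B` negates the shift, so let `p > 0` or `p = 0 < q`.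
If `p > 0`, the last row of `B` lies on an upper row of `A`, and its final block `0^k`, its
leading block `1^(gB+k)` or the zero last column of `B` meets a part of `A` where it cannot fit.
If `p = 0`, the final `0^k` of the last row of `B` forces `q < k`, and then the `1` in column
`n - k` of the first row of `A` meets the final zeros of the first row of `B`. When `1^(gB+k)`
lands on the first row of `A` it covers the `0` in column `gA + k - 1`; this needs `gA ≤ gB + 1`.
-/

namespace List

theorem getD_replicate_append_replicate (a b : ℕ) (v : List Bool) (j : ℕ) :
    (replicate a true ++ v ++ replicate b false).getD j false =
      if j < a then true else v.getD (j - a) false := by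
  simp only [getD_eq_getElem?_getD, getElem?_append, getElem?_replicate, length_append,
    length_replicate]
  grind

theorem replicate_infix_of_getD {α : Type*} {l : List α} {c d : α} {s k : ℕ}
    (hs : s + k ≤ l.length) (h : ∀ r < k, l.getD (s + r) d = c) : replicate k c <:+: l := by
  refine infix_iff_getElem?.2 ⟨s, by simpa [add_comm] using hs, fun r hr => ?_⟩
  rw [length_replicate] at hr
  rw [getElem_replicate, add_comm, getElem?_eq_getElem (by omega), ← h r hr,
    getD_eq_getElem _ _ (by omega)]

theorem getD_length_sub_one {α : Type*} {l : List α} {c d : α} (h : l.getLast? = some c) :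
    l.getD (l.length - 1) d = c := by
  rw [getD_eq_getElem?_getD, ← getLast?_eq_getElem?, h, Option.getD_some]

end List

open List

def IsRun (f : ℕ → Bool) (c : Bool) (s k : ℕ) : Prop :=
  ∀ r < k, f (s + r) = c

theorem Avoids.not_isRun {k : ℕ} {l : List Bool} (hl : Avoids k l) {c : Bool} {s : ℕ}
    (hs : s + k ≤ l.length) : ¬ IsRun (l.getD · false) c s k := fun hrun => by
  cases c
  exacts [hl.1 (replicate_infix_of_getD hs hrun), hl.2 (replicate_infix_of_getD hs hrun)]

theorem Avoids.not_isRun_middle {k a b : ℕ} {v : List Bool} (hv : Avoids k v) {c : Bool}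
    {s : ℕ} (has : a ≤ s) (hs : s + k ≤ a + v.length) :
    ¬ IsRun ((replicate a true ++ v ++ replicate b false).getD · false) c s k := by
  intro hrun
  refine hv.not_isRun (c := c) (s := s - a) (by omega) fun r hr => ?_
  have := hrun r hr
  dsimp only at this ⊢
  rwa [getD_replicate_append_replicate, if_neg (by omega),
    show s + r - a = s - a + r by omega] at this

structure IsSkhFirstRow (n k g : ℕ) (f : ℕ → Bool) : Prop where
  head_true : ∀ j < g + (k - 1), f j = true
  false_after_head : f (g + (k - 1)) = false
  true_before_tail : f (n - k) = true
  tail_false : ∀ j, n - k < j → f j = false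
  no_zero_run : ∀ s, s + k ≤ n → ¬ IsRun f false s k
  no_inner_one_run : ∀ s, g + (k - 1) ≤ s → s + k ≤ n - k + 1 → ¬ IsRun f true s k

structure IsSkhLastRow (n k g : ℕ) (f : ℕ → Bool) : Prop where
  head_true : ∀ j < g + k, f j = true
  tail_false : ∀ j, n - k ≤ j → f j = false
  no_inner_zero_run : ∀ s, g + k ≤ s → s + k ≤ n - k → ¬ IsRun f false s k

theorem isSkhFirstRow_getD {n k g : ℕ} {v : List Bool} (hk : 2 ≤ k) (hn : g + 2 * k ≤ n)
    (hlen : v.length = n - 2 * k + 2 - g) (hv : Avoids k v) (hhead : v.head? = some false)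
    (hlast : v.getLast? = some true) :
    IsSkhFirstRow n k g
      ((replicate (g + (k - 1)) true ++ v ++ replicate (k - 1) false).getD · false) := by
  have hv_first : v.getD 0 false = false := by
    rw [getD_eq_getElem?_getD, ← head?_eq_getElem?, hhead, Option.getD_some]
  have hv_last := getD_length_sub_one (d := false) hlast
  have hf := getD_replicate_append_replicate (g + (k - 1)) (k - 1) v
  refine ⟨fun j hj => ?_, ?_, ?_, fun j hj => ?_, fun s hs hrun => ?_,
    fun s hs₁ hs₂ => hv.not_isRun_middle hs₁ (by omega)⟩
  · rw [hf, if_pos hj]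
  · rwa [hf, if_neg (by omega), Nat.sub_self]
  · rwa [hf, if_neg (by omega), show n - k - (g + (k - 1)) = v.length - 1 by omega]
  · rw [hf, if_neg (by omega), getD_eq_default _ _ (by omega)]
  · by_cases hs_head : s < g + (k - 1)
    · have := hrun 0 (by omega)
      dsimp only at this
      rw [hf, if_pos (by omega)] at this
      exact Bool.noConfusion this
    by_cases hs_inner : s + k ≤ g + (k - 1) + v.length
    · exact hv.not_isRun_middle (by omega) hs_inner hrun
    · have := hrun (n - k - s) (by omega)
      dsimp only at this
      rw [hf, if_neg (by omega), show s + (n - k - s) - (g + (k - 1)) = v.length - 1 by omega,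
        hv_last] at this
      exact Bool.noConfusion this

theorem isSkhLastRow_getD {n k g : ℕ} {v : List Bool} (hn : g + 2 * k ≤ n)
    (hlen : v.length = n - 2 * k - g) (hv : Avoids k v) :
    IsSkhLastRow n k g ((replicate (g + k) true ++ v ++ replicate k false).getD · false) := by
  have hf := getD_replicate_append_replicate (g + k) k v
  refine ⟨fun j hj => ?_, fun j hj => ?_, fun s hs₁ hs₂ => hv.not_isRun_middle hs₁ (by omega)⟩
  · rw [hf, if_pos hj]
  · rw [hf, if_neg (by omega), getD_eq_default _ _ (by omega)]

section Matrix

variable {m n : ℕ} {A B : Fin m → Fin n → Bool}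

theorem length_row (A : Fin m → Fin n → Bool) (i : ℕ) : (row A i).length = n :=
  length_ofFn

def entry (A : Fin m → Fin n → Bool) (i j : ℕ) : Bool :=
  (row A i).getD j false

theorem entry_eq_apply (A : Fin m → Fin n → Bool) (i : Fin m) (j : Fin n) :
    entry A i j = A i j := by
  simp [entry, row, getD_eq_getElem?_getD]

theorem IsOverlap.entry_eq {p q : ℤ} (O : IsOverlap A B p q) {i j i' j' : ℕ} (hi : i < m)
    (hj : j < n) (hi' : i' < m) (hj' : j' < n) (hp : (i' : ℤ) = i + p) (hq : (j' : ℤ) = j + q) :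
    entry A i j = entry B i' j' :=
  (entry_eq_apply A ⟨i, hi⟩ ⟨j, hj⟩).trans <|
    (O.2.2.2 _ _ ⟨i', hi'⟩ ⟨j', hj'⟩ hp hq).trans (entry_eq_apply B _ _).symm

theorem IsOverlap.symm {p q : ℤ} (O : IsOverlap A B p q) : IsOverlap B A (-p) (-q) := by
  obtain ⟨hpq, hp, hq, hAB⟩ := O
  refine ⟨by omega, by omega, by omega, fun i j i' j' hi hj => ?_⟩
  exact (hAB i' j' i j (by omega) (by omega)).symm

end Matrix

structure HasSkhShape (m n k g : ℕ) (A : Fin m → Fin n → Bool) : Prop where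
  add_two_mul_le : g + 2 * k ≤ n
  first_row : IsSkhFirstRow n k g (entry A 0)
  middle_no_run : ∀ i, 0 < i → i + 1 < m → ∀ c s, s + k ≤ n → ¬ IsRun (entry A i) c s k
  last_row : IsSkhLastRow n k g (entry A (m - 1))
  last_col_false : ∀ i < m, entry A i (n - 1) = false

theorem hasSkhShape_of_mem {m n k g : ℕ} {A : Fin m → Fin n → Bool} (hk : 2 ≤ k)
    (hA : A ∈ SkhSet m n k g) : HasSkhShape m n k g A := by
  obtain ⟨⟨v, hvlen, hv, hhead, hlast, hfirst⟩, hmiddle, ⟨w, hwlen, hw, hlast_row⟩⟩ := hA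
  have hn : g + 2 * k ≤ n := by
    have := congrArg length hlast_row
    simp only [length_row, length_append, length_replicate] at this
    omega
  have first := isSkhFirstRow_getD hk hn hvlen hv hhead hlast
  have last := isSkhLastRow_getD hn hwlen hw
  rw [← hfirst] at first
  rw [← hlast_row] at last
  refine ⟨hn, first, fun i hi₀ hi c s hs => ?_, last, fun i hi => ?_⟩
  · exact (hmiddle i hi₀ (by omega)).1.not_isRun (by rwa [length_row])
  · rcases Nat.eq_zero_or_pos i with rfl | hi₀
    · exact first.tail_false _ (by omega)
    by_cases hi_last : i = m - 1
    · subst hi_last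
      exact last.tail_false _ (by omega)
    · have := getD_length_sub_one (d := false) (hmiddle i hi₀ (by omega)).2
      rwa [length_row] at this

section Overlap

variable {m n k gA gB : ℕ} {A B : Fin m → Fin n → Bool}

theorem HasSkhShape.not_isRun_false (hA : HasSkhShape m n k gA A) {i s : ℕ} (hi : i + 1 < m)
    (hs : s + k ≤ n) : ¬ IsRun (entry A i) false s k := by
  rcases Nat.eq_zero_or_pos i with rfl | hi₀
  exacts [hA.first_row.no_zero_run s hs, hA.middle_no_run i hi₀ hi false s hs]

theorem not_isOverlap_of_pos_of_nonneg (hA : HasSkhShape m n k gA A)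
    (hB : HasSkhShape m n k gB B) {p q : ℤ} (hp : 0 < p) (hq : 0 ≤ q) :
    ¬ IsOverlap A B p q := by
  intro O
  have hn := hA.add_two_mul_le
  lift p to ℕ using hp.le
  lift q to ℕ using hq
  have hpm : p ≤ m - 1 := by simpa using O.2.1
  have hqn : q ≤ n - 1 := by simpa using O.2.2.1
  by_cases hqk : q ≤ n - k
  · refine hA.not_isRun_false (i := m - 1 - p) (s := n - k - q) (by omega) (by omega)
      fun r hr => ?_
    rw [O.entry_eq (i' := m - 1) (j' := n - k + r) (by omega) (by omega) (by omega) (by omega)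
      (by omega) (by omega)]
    exact hB.last_row.tail_false _ (by omega)
  · have := O.entry_eq (i := 0) (j := n - 1 - q) (i' := p) (j' := n - 1) (by omega) (by omega)
      (by omega) (by omega) (by omega) (by omega)
    rw [hA.first_row.head_true _ (by omega), hB.last_col_false p (by omega)] at this
    exact Bool.noConfusion this

theorem not_isOverlap_of_pos_of_neg (hA : HasSkhShape m n k gA A)
    (hB : HasSkhShape m n k gB B) (hAB : gA ≤ gB + 1) (hk : 0 < k) {p q : ℤ} (hp : 0 < p)
    (hq : q < 0) : ¬ IsOverlap A B p q := by
  intro O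
  have hn := hA.add_two_mul_le
  lift p to ℕ using hp.le
  obtain ⟨q, rfl⟩ : ∃ q' : ℕ, q = -q' := ⟨q.natAbs, by omega⟩
  have hpm : p ≤ m - 1 := by simpa using O.2.1
  have hqn : q ≤ n - 1 := by simpa using O.2.2.1
  by_cases hq_wide : n ≤ q + gB + k
  · have := O.entry_eq (i := m - 1 - p) (j := n - 1) (i' := m - 1) (j' := n - 1 - q)
      (by omega) (by omega) (by omega) (by omega) (by omega) (by omega)
    rw [hA.last_col_false _ (by omega), hB.last_row.head_true _ (by omega)] at this
    exact Bool.noConfusion this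
  have hrun : IsRun (entry A (m - 1 - p)) true q (gB + k) := fun r hr => by
    rw [O.entry_eq (i' := m - 1) (j' := r) (by omega) (by omega) (by omega) (by omega)
      (by omega) (by omega)]
    exact hB.last_row.head_true r hr
  rcases Nat.eq_zero_or_pos (m - 1 - p) with hrow | hrow
  · rw [hrow] at hrun
    by_cases hq_head : q ≤ gA + (k - 1)
    · have := hrun (gA + (k - 1) - q) (by omega)
      rw [Nat.add_sub_cancel' hq_head, hA.first_row.false_after_head] at this
      exact Bool.noConfusion this
    by_cases hq_inner : q + k ≤ n - k + 1
    · exact hA.first_row.no_inner_one_run q (by omega) hq_inner fun r hr => hrun r (by omega)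
    · have := hrun (k - 1) (by omega)
      rw [hA.first_row.tail_false _ (by omega)] at this
      exact Bool.noConfusion this
  · exact hA.middle_no_run _ hrow (by omega) true q (by omega) fun r hr => hrun r (by omega)

theorem not_isOverlap_of_zero_of_pos (hA : HasSkhShape m n k gA A)
    (hB : HasSkhShape m n k gB B) (hm : 0 < m) (hk : 0 < k) {q : ℤ} (hq : 0 < q) :
    ¬ IsOverlap A B 0 q := by
  intro O
  have hn := hA.add_two_mul_le
  lift q to ℕ using hq.le
  have hqn : q ≤ n - 1 := by simpa using O.2.2.1
  by_cases hq_tail : n - k ≤ q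
  · have := O.entry_eq (i := m - 1) (j := 0) (i' := m - 1) (j' := q)
      (by omega) (by omega) (by omega) (by omega) (by omega) (by omega)
    rw [hA.last_row.head_true 0 (by omega), hB.last_row.tail_false q hq_tail] at this
    exact Bool.noConfusion this
  have hrun : IsRun (entry A (m - 1)) false (n - k - q) k := fun r hr => by
    rw [O.entry_eq (i' := m - 1) (j' := n - k + r) (by omega) (by omega) (by omega) (by omega)
      (by omega) (by omega)]
    exact hB.last_row.tail_false _ (by omega)
  have hq_inner : gA + k ≤ n - k - q := by
    by_contra h
    have := hrun 0 hk
    rw [hA.last_row.head_true _ (by omega)] at this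
    exact Bool.noConfusion this
  have hqk : q < k := by
    by_contra h
    exact hA.last_row.no_inner_zero_run _ hq_inner (by omega) hrun
  have := O.entry_eq (i := 0) (j := n - k) (i' := 0) (j' := n - k + q)
    (by omega) (by omega) (by omega) (by omega) (by omega) (by omega)
  rw [hA.first_row.true_before_tail, hB.first_row.tail_false _ (by omega)] at this
  exact Bool.noConfusion this

theorem not_isOverlap (hA : HasSkhShape m n k gA A) (hB : HasSkhShape m n k gB B)
    (hAB : gA ≤ gB + 1) (hBA : gB ≤ gA + 1) (hm : 0 < m) (hk : 0 < k) (p q : ℤ) :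
    ¬ IsOverlap A B p q := by
  intro O
  rcases lt_trichotomy p 0 with hp | rfl | hp
  · rcases le_or_gt q 0 with hq | hq
    · exact not_isOverlap_of_pos_of_nonneg hB hA (neg_pos.2 hp) (neg_nonneg.2 hq) O.symm
    · exact not_isOverlap_of_pos_of_neg hB hA hBA hk (neg_pos.2 hp) (neg_lt_zero.2 hq) O.symm
  · rcases lt_trichotomy q 0 with hq | rfl | hq
    · exact not_isOverlap_of_zero_of_pos hB hA hm hk (neg_pos.2 hq) (by simpa using O.symm)
    · exact O.1 ⟨rfl, rfl⟩
    · exact not_isOverlap_of_zero_of_pos hA hB hm hk hq O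
  · rcases le_or_gt 0 q with hq | hq
    · exact not_isOverlap_of_pos_of_nonneg hA hB hp hq O
    · exact not_isOverlap_of_pos_of_neg hA hB hAB hk hp hq O

end Overlap

theorem SkhSet_union_succ_nonOverlapping_general (m n k h : ℕ) (hm : 2 ≤ m) (hk : 3 ≤ k) :
    (∀ A ∈ SkhSet m n k h ∪ SkhSet m n k (h + 1), ¬ ∃ p q : ℤ, IsOverlap A A p q) ∧
    (∀ A ∈ SkhSet m n k h ∪ SkhSet m n k (h + 1),
      ∀ B ∈ SkhSet m n k h ∪ SkhSet m n k (h + 1),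
        A ≠ B → ¬ ∃ p q : ℤ, IsOverlap A B p q) := by
  have shape : ∀ A ∈ SkhSet m n k h ∪ SkhSet m n k (h + 1),
      ∃ g, h ≤ g ∧ g ≤ h + 1 ∧ HasSkhShape m n k g A := by
    rintro A (hA | hA)
    exacts [⟨h, le_rfl, h.le_succ, hasSkhShape_of_mem (by omega) hA⟩,
      ⟨h + 1, h.le_succ, le_rfl, hasSkhShape_of_mem (by omega) hA⟩]
  have no_overlap : ∀ A ∈ SkhSet m n k h ∪ SkhSet m n k (h + 1),
      ∀ B ∈ SkhSet m n k h ∪ SkhSet m n k (h + 1), ¬ ∃ p q : ℤ, IsOverlap A B p q := by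
    rintro A hA B hB ⟨p, q, O⟩
    obtain ⟨gA, hgA₁, hgA₂, hA⟩ := shape A hA
    obtain ⟨gB, hgB₁, hgB₂, hB⟩ := shape B hB
    exact not_isOverlap hA hB (by omega) (by omega) (by omega) (by omega) p q O
  exact ⟨fun A hA => no_overlap A hA A hA, fun A hA B hB _ => no_overlap A hA B hB⟩

/-- `S^(k,h)_{m×n} ∪ S^(k,h+1)_{m×n}` is a non-overlapping set. -/
theorem SkhSet_union_succ_nonOverlapping (m n k h : ℕ) (hm : 2 ≤ m) (hk : 3 ≤ k)
    (hkn : k ≤ n / 2) (hn : 2 * k ≤ n) (hh : h < n - 2*k) :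
    (∀ A ∈ SkhSet m n k h ∪ SkhSet m n k (h + 1), ¬ ∃ p q : ℤ, IsOverlap A A p q) ∧
    (∀ A ∈ SkhSet m n k h ∪ SkhSet m n k (h + 1),
      ∀ B ∈ SkhSet m n k h ∪ SkhSet m n k (h + 1),
        A ≠ B → ¬ ∃ p q : ℤ, IsOverlap A B p q) :=
  SkhSet_union_succ_nonOverlapping_general m n k h hm hk
end
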